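/- (Bound on the number of outcome orbits) If A ∈ 𝒞 is an extreme point of 𝒞, then the number of indices i ∈ I with A i ≠ 0 is at most dim_ℂ (commutant of U). In particular, in the maximization of the mutual information over covariant POVMs one may restrict to index sets with |I| ≤ Σ_μ m_μ². -/

import Mathlib

open ContinuousLinearMap

set_option maxHeartbeats 1000000
set_option synthInstance.maxHeartbeats 400000

/-- The linear map `L(A) = (1/|G|) · Σ_{i ∈ I} Σ_{g ∈ G} (U g) ∘ (A i) ∘ (U g)†`
associated to a family of operators `A : I → (H →L[ℂ] H)`. -/
noncomputable def Lmap {H : Type*} [NormedAddCommGroup H] [InnerProductSpace ℂ H]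
    [FiniteDimensional ℂ H] {G : Type*} [Group G] [Fintype G] {I : Type*} [Fintype I]
    (U : G → (H →L[ℂ] H)) (A : I → (H →L[ℂ] H)) : H →L[ℂ] H :=
  (Fintype.card G : ℂ)⁻¹ •
    ∑ i : I, ∑ g : G, U g ∘L A i ∘L ContinuousLinearMap.adjoint (U g)

/-- The convex set `𝒞` of block operators corresponding to covariant POVMs with
outcome space `I × G`: families `A` with every `A i` positive semidefinite and `L(A) = 1`. -/
def covSet {H : Type*} [NormedAddCommGroup H] [InnerProductSpace ℂ H]
    [FiniteDimensional ℂ H] {G : Type*} [Group G] [Fintype G] {I : Type*} [Fintype I]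
    (U : G → (H →L[ℂ] H)) : Set (I → (H →L[ℂ] H)) :=
  {A | (∀ i, (A i).IsPositive) ∧ Lmap U A = 1}

/-- The commutant of a family of operators `U : G → (H →L[ℂ] H)`, as a `ℂ`-subspace of
`H →L[ℂ] H`. -/
def commutant {H : Type*} [NormedAddCommGroup H] [InnerProductSpace ℂ H]
    {G : Type*} (U : G → (H →L[ℂ] H)) : Submodule ℂ (H →L[ℂ] H) where
  carrier := {C | ∀ g, C ∘L U g = U g ∘L C}
  add_mem' := by
    intro C D hC hD g
    simp only [ContinuousLinearMap.add_comp, ContinuousLinearMap.comp_add, hC g, hD g]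
  zero_mem' := by intro g; simp
  smul_mem' := by
    intro c C hC g
    ext x
    simp [hC g]

/-! ### Auxiliary definitions and lemmas -/

/-- The group average of a single operator. -/
noncomputable def Tmap {H : Type*} [NormedAddCommGroup H] [InnerProductSpace ℂ H]
    [FiniteDimensional ℂ H] {G : Type*} [Group G] [Fintype G]
    (U : G → (H →L[ℂ] H)) (B : H →L[ℂ] H) : H →L[ℂ] H :=
  (Fintype.card G : ℂ)⁻¹ • ∑ g : G, U g ∘L B ∘L ContinuousLinearMap.adjoint (U g)

section Aux

variable {H : Type*} [NormedAddCommGroup H] [InnerProductSpace ℂ H]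
    [FiniteDimensional ℂ H] {G : Type*} [Group G] [Fintype G] {I : Type*} [Fintype I]
    (U : G → (H →L[ℂ] H))

lemma Lmap_eq_sum_Tmap (A : I → (H →L[ℂ] H)) : Lmap U A = ∑ i, Tmap U (A i) := by
  unfold Lmap Tmap
  rw [Finset.smul_sum]

lemma Tmap_comm (hU2 : ∀ g, ContinuousLinearMap.adjoint (U g) ∘L U g = 1)
    (hUm : ∀ g h, U (g * h) = U g ∘L U h) (B : H →L[ℂ] H) (h : G) :
    Tmap U B ∘L U h = U h ∘L Tmap U B := by
  have hU2' : ∀ g, ContinuousLinearMap.adjoint (U g) * U g = 1 := fun g => by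
    rw [mul_def]; exact hU2 g
  have hUm' : ∀ g k, U (g * k) = U g * U k := fun g k => by
    rw [mul_def]; exact hUm g k
  rw [← mul_def, ← mul_def]
  unfold Tmap
  rw [smul_mul_assoc, mul_smul_comm, Finset.sum_mul, Finset.mul_sum]
  congr 1
  refine (Fintype.sum_equiv (Equiv.mulLeft h)
    (fun g => U h * (U g ∘L B ∘L ContinuousLinearMap.adjoint (U g)))
    (fun g => (U g ∘L B ∘L ContinuousLinearMap.adjoint (U g)) * U h) ?_).symm
  intro g
  simp only [Equiv.coe_mulLeft, ← mul_def]
  rw [hUm' h g, show ContinuousLinearMap.adjoint (U h * U g)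
      = ContinuousLinearMap.adjoint (U g) * ContinuousLinearMap.adjoint (U h) from by
    rw [← star_eq_adjoint, star_mul, star_eq_adjoint, star_eq_adjoint]]
  simp only [mul_assoc, hU2' h, mul_one]

lemma Tmap_mem_commutant (hU2 : ∀ g, ContinuousLinearMap.adjoint (U g) ∘L U g = 1)
    (hUm : ∀ g h, U (g * h) = U g ∘L U h) (B : H →L[ℂ] H) :
    Tmap U B ∈ commutant U :=
  fun g => Tmap_comm U hU2 hUm B g

lemma Tmap_star (B : H →L[ℂ] H) (hB : star B = B) : star (Tmap U B) = Tmap U B := by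
  unfold Tmap
  simp only [star_smul, star_sum, star_inv₀, star_natCast]
  congr 1
  refine Finset.sum_congr rfl fun g _ => ?_
  rw [star_eq_adjoint, adjoint_comp, adjoint_comp, adjoint_adjoint,
    ← star_eq_adjoint B, hB, comp_assoc]

lemma Tmap_csmul (B : H →L[ℂ] H) (z : ℂ) : Tmap U (z • B) = z • Tmap U B := by
  unfold Tmap
  simp only [smul_comp, comp_smul]
  rw [← Finset.smul_sum, smul_comm]

omit [FiniteDimensional ℂ H] in
lemma real_smul_eq (r : ℝ) (T : H →L[ℂ] H) : r • T = (r : ℂ) • T := by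
  rw [← algebraMap_smul ℂ r T, Complex.coe_algebraMap]

lemma Tmap_real_smul (B : H →L[ℂ] H) (r : ℝ) : Tmap U (r • B) = r • Tmap U B := by
  rw [real_smul_eq, real_smul_eq, Tmap_csmul]

lemma isPositive_real_smul {T : H →L[ℂ] H} (hT : T.IsPositive) {r : ℝ} (hr : 0 ≤ r) :
    (r • T).IsPositive := by
  rw [real_smul_eq]
  constructor
  · refine isSelfAdjoint_iff_isSymmetric.mp ?_
    show star _ = _
    rw [star_smul, hT.isSelfAdjoint.star_eq, Complex.star_def, Complex.conj_ofReal]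
  · intro x
    have h0 := hT.2 x
    rw [reApplyInnerSelf_apply] at h0 ⊢
    rw [smul_apply, inner_smul_left, Complex.conj_ofReal, ← Complex.real_smul,
      RCLike.smul_re]
    exact mul_nonneg hr h0

/-- Key lemma: real coefficient relations among the averaged operators of an extreme
point must vanish on the support. -/
lemma key_real {U : G → (H →L[ℂ] H)} {A : I → (H →L[ℂ] H)} (hA : A ∈ covSet U)
    (hext : A ∈ Set.extremePoints ℝ (covSet U)) (c : I → ℝ)
    (hc : ∑ i, c i • Tmap U (A i) = 0) :
    ∀ i, A i ≠ 0 → c i = 0 := by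
  set ε : ℝ := (1 + ∑ i, |c i|)⁻¹ with hεdef
  have hsum_nonneg : 0 ≤ ∑ i, |c i| := Finset.sum_nonneg fun i _ => abs_nonneg _
  have hεpos : 0 < ε := inv_pos.2 (by linarith)
  have hbound : ∀ i, |ε * c i| ≤ 1 := by
    intro i
    rw [abs_mul, abs_of_pos hεpos]
    have h1 : |c i| ≤ 1 + ∑ j, |c j| := by
      have := Finset.single_le_sum (f := fun j => |c j|) (fun j _ => abs_nonneg _)
        (Finset.mem_univ i)
      linarith
    calc ε * |c i| ≤ ε * (1 + ∑ j, |c j|) := by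
          exact mul_le_mul_of_nonneg_left h1 hεpos.le
      _ = 1 := inv_mul_cancel₀ (by positivity)
  have hb1 : ∀ i, 0 ≤ 1 + ε * c i := by
    intro i; have := (abs_le.1 (hbound i)).1; linarith
  have hb2 : ∀ i, 0 ≤ 1 - ε * c i := by
    intro i; have := (abs_le.1 (hbound i)).2; linarith
  set Bp : I → (H →L[ℂ] H) := fun i => (1 + ε * c i) • A i with hBpdef
  set Bm : I → (H →L[ℂ] H) := fun i => (1 - ε * c i) • A i with hBmdef
  have hsum_p : ∑ i, Tmap U (Bp i) = 1 := by
    have e : ∀ i ∈ Finset.univ, Tmap U (Bp i)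
        = Tmap U (A i) + ε • (c i • Tmap U (A i)) := by
      intro i _
      rw [hBpdef, Tmap_real_smul, add_smul, one_smul, mul_smul]
    rw [Finset.sum_congr rfl e, Finset.sum_add_distrib, ← Finset.smul_sum, hc, smul_zero,
      add_zero, ← Lmap_eq_sum_Tmap, hA.2]
  have hsum_m : ∑ i, Tmap U (Bm i) = 1 := by
    have e : ∀ i ∈ Finset.univ, Tmap U (Bm i)
        = Tmap U (A i) - ε • (c i • Tmap U (A i)) := by
      intro i _
      rw [hBmdef, Tmap_real_smul, sub_smul, one_smul, mul_smul]
    rw [Finset.sum_congr rfl e, Finset.sum_sub_distrib, ← Finset.smul_sum, hc, smul_zero,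
      sub_zero, ← Lmap_eq_sum_Tmap, hA.2]
  have hBp_mem : Bp ∈ covSet U :=
    ⟨fun i => isPositive_real_smul (hA.1 i) (hb1 i), by rw [Lmap_eq_sum_Tmap]; exact hsum_p⟩
  have hBm_mem : Bm ∈ covSet U :=
    ⟨fun i => isPositive_real_smul (hA.1 i) (hb2 i), by rw [Lmap_eq_sum_Tmap]; exact hsum_m⟩
  have hseg : A ∈ openSegment ℝ Bp Bm := by
    refine ⟨1/2, 1/2, by norm_num, by norm_num, by norm_num, ?_⟩
    funext i
    simp only [Pi.add_apply, Pi.smul_apply, hBpdef, hBmdef]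
    rw [smul_smul, smul_smul, ← add_smul]
    have : (1/2 : ℝ) * (1 + ε * c i) + (1/2) * (1 - ε * c i) = 1 := by ring
    rw [this, one_smul]
  have hBpA : Bp = A := hext.2 hBp_mem hBm_mem hseg
  intro i hAi
  have hi : (1 + ε * c i) • A i = A i := congrFun hBpA i
  have h2 : (ε * c i) • A i = 0 := by
    have h3 : ((1 + ε * c i) - 1) • A i = 0 := by
      rw [sub_smul, hi, one_smul, sub_self]
    simpa using h3
  rcases smul_eq_zero.mp h2 with h | h
  · exact (mul_eq_zero.mp h).resolve_left (ne_of_gt hεpos)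
  · exact absurd h hAi

/-- Complex coefficient relations among the averaged operators of an extreme point
must also vanish on the support (using self-adjointness). -/
lemma key_complex {U : G → (H →L[ℂ] H)} {A : I → (H →L[ℂ] H)} (hA : A ∈ covSet U)
    (hext : A ∈ Set.extremePoints ℝ (covSet U)) (w : I → ℂ)
    (hw : ∑ i, w i • Tmap U (A i) = 0) :
    ∀ i, A i ≠ 0 → w i = 0 := by
  have hTs : ∀ i, star (Tmap U (A i)) = Tmap U (A i) := fun i =>
    Tmap_star U _ ((hA.1 i).isSelfAdjoint.star_eq)
  have hw' : ∑ i, (starRingEnd ℂ) (w i) • Tmap U (A i) = 0 := by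
    have h := congrArg star hw
    rw [star_sum] at h
    simp only [star_smul, hTs, star_zero] at h
    exact h
  have hadd : ∑ i, (2 * (w i).re) • Tmap U (A i) = 0 := by
    have h : ∑ i, (w i + (starRingEnd ℂ) (w i)) • Tmap U (A i) = 0 := by
      simp only [add_smul, Finset.sum_add_distrib]
      rw [hw, hw', add_zero]
    calc ∑ i, (2 * (w i).re) • Tmap U (A i)
        = ∑ i, (w i + (starRingEnd ℂ) (w i)) • Tmap U (A i) := by
          refine Finset.sum_congr rfl fun i _ => ?_
          rw [Complex.add_conj, real_smul_eq, Complex.ofReal_mul, Complex.ofReal_ofNat]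
      _ = 0 := h
  have hsub : ∑ i, (2 * (w i).im) • Tmap U (A i) = 0 := by
    have h : ∑ i, (w i - (starRingEnd ℂ) (w i)) • Tmap U (A i) = 0 := by
      simp only [sub_smul, Finset.sum_sub_distrib]
      rw [hw, hw', sub_zero]
    have h2 := congrArg (fun X => (-Complex.I) • X) h
    simp only [Finset.smul_sum, smul_smul, smul_zero] at h2
    calc ∑ i, (2 * (w i).im) • Tmap U (A i)
        = ∑ i, (-Complex.I * (w i - (starRingEnd ℂ) (w i))) • Tmap U (A i) := by
          refine Finset.sum_congr rfl fun i _ => ?_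
          rw [Complex.sub_conj, real_smul_eq]
          congr 1
          rw [mul_comm ((2 * (w i).im : ℝ) : ℂ) Complex.I, ← mul_assoc, neg_mul,
            Complex.I_mul_I, neg_neg, one_mul]
      _ = 0 := h2
  intro i hAi
  have h1 := key_real hA hext _ hadd i hAi
  have h2 := key_real hA hext _ hsub i hAi
  have hre : (w i).re = 0 := by linarith
  have him : (w i).im = 0 := by linarith
  exact Complex.ext hre him

end Aux

/-- (Bound on the number of outcome orbits) If `A ∈ 𝒞` is an extreme point of `𝒞`, then the
number of indices `i` with `A i ≠ 0` is at most the dimension of the commutant of `U`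
(which equals `Σ_μ m_μ²`). -/
theorem extremePoint_card_support_le
    {H : Type*} [NormedAddCommGroup H] [InnerProductSpace ℂ H] [FiniteDimensional ℂ H]
    [Nontrivial H]
    {G : Type*} [Group G] [Fintype G] {I : Type*} [Fintype I] [Nonempty I]
    (U : G → (H →L[ℂ] H))
    (hU1 : ∀ g, U g ∘L ContinuousLinearMap.adjoint (U g) = 1)
    (hU2 : ∀ g, ContinuousLinearMap.adjoint (U g) ∘L U g = 1)
    (hUm : ∀ g h, U (g * h) = U g ∘L U h)
    (A : I → (H →L[ℂ] H)) (hA : A ∈ covSet U)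
    (hext : A ∈ Set.extremePoints ℝ (covSet U)) :
    {i : I | A i ≠ 0}.ncard ≤ Module.finrank ℂ (commutant U) := by
  classical
  set S : Set I := {i : I | A i ≠ 0} with hSdef
  haveI : Fintype ↥S := (Set.toFinite S).fintype
  have hindep : LinearIndependent ℂ (fun i : ↥S =>
      (⟨Tmap U (A i), Tmap_mem_commutant U hU2 hUm (A i)⟩ : commutant U)) := by
    rw [Fintype.linearIndependent_iff]
    intro z hz
    have hz' : ∑ i : ↥S, z i • Tmap U (A (i : I)) = 0 := by
      have h := congrArg (Subtype.val) hz
      simpa using h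
    set w : I → ℂ := fun i => if h : A i ≠ 0 then z ⟨i, h⟩ else 0 with hwdef
    have hw : ∑ i : I, w i • Tmap U (A i) = 0 := by
      have e1 : ∑ i ∈ Finset.univ.filter (fun i => A i ≠ 0), w i • Tmap U (A i)
          = ∑ i : I, w i • Tmap U (A i) := by
        refine Finset.sum_filter_of_ne fun i _ hne => ?_
        by_contra hp
        exact hne (by simp [hwdef, hp])
      have e2 : ∑ i ∈ Finset.univ.filter (fun i => A i ≠ 0), w i • Tmap U (A i)
          = ∑ i : ↥S, w (i : I) • Tmap U (A (i : I)) := by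
        refine Finset.sum_subtype _ (fun i => ?_) _
        simp [hSdef]
      have e3 : ∑ i : ↥S, w (i : I) • Tmap U (A (i : I)) = 0 := by
        rw [← hz']
        refine Finset.sum_congr rfl fun i _ => ?_
        have hp : A (i : I) ≠ 0 := i.prop
        show (if hh : A (i : I) ≠ 0 then z ⟨(i : I), hh⟩ else 0) • _ = _
        rw [dif_pos hp, Subtype.coe_eta]
      rw [← e1, e2, e3]
    have hzero := key_complex hA hext w hw
    intro i
    have hp : A (i : I) ≠ 0 := i.prop
    have h : (if hh : A (i : I) ≠ 0 then z ⟨(i : I), hh⟩ else 0) = 0 := hzero i hp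
    rwa [dif_pos hp, Subtype.coe_eta] at h
  have hcard : Fintype.card ↥S ≤ Module.finrank ℂ (commutant U) :=
    hindep.fintype_card_le_finrank
  rw [Set.ncard_eq_toFinset_card' S, Set.toFinset_card]
  exact hcard
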